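/- If w is the treewidth of a base network G and w^t is the treewidth of its twin network G^t, then w^t ≤ 2w + 1. -/

import Mathlib

namespace Counterfactual

attribute [local instance] Classical.propDecidable

noncomputable section

universe u v

variable {V : Type u}

variable {V : Type u}

/-- The directed graph given by edge relation `E` (`E p c` means `p` is a parent of `c`)
is acyclic, i.e. it is a DAG. -/
def IsAcyclicRel (E : V → V → Prop) : Prop := ∀ x, ¬ Relation.TransGen E x x

/-- `x` is a root of the DAG `E`: it has no parents.  Non-roots are called internal. -/
def isRoot (E : V → V → Prop) (x : V) : Prop := ∀ p, ¬ E p x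

/-- The family of variable `X` in the DAG `E`: `X` together with its parents. -/
def famOf (E : V → V → Prop) (X : V) : Set V := insert X {p | E p X}

/-- The moral graph of the DAG `E`: connect every pair of nodes having a common child,
then drop directions. -/
def moralGraph (E : V → V → Prop) : SimpleGraph V where
  Adj u w := u ≠ w ∧ (E u w ∨ E w u ∨ ∃ c, E u c ∧ E w c)
  symm := by
    constructor
    intro u w h
    obtain ⟨h1, h2⟩ := h
    refine ⟨Ne.symm h1, ?_⟩
    rcases h2 with h | h | ⟨c, hc1, hc2⟩
    · exact Or.inr (Or.inl h)
    · exact Or.inl h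
    · exact Or.inr (Or.inr ⟨c, hc2, hc1⟩)
  loopless := by
    constructor
    intro u h
    exact h.1 rfl

/-- Eliminating vertex `x` from an undirected graph: pairwise connect the neighbors
of `x`, then remove (isolate) `x`. -/
def eliminate (G : SimpleGraph V) (x : V) : SimpleGraph V where
  Adj u w := u ≠ w ∧ u ≠ x ∧ w ≠ x ∧ (G.Adj u w ∨ (G.Adj u x ∧ G.Adj x w))
  symm := by
    constructor
    intro u w h
    obtain ⟨h1, h2, h3, h4⟩ := h
    refine ⟨Ne.symm h1, h3, h2, ?_⟩
    rcases h4 with h | ⟨ha, hb⟩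
    · exact Or.inl h.symm
    · exact Or.inr ⟨hb.symm, ha.symm⟩
  loopless := by
    constructor
    intro u h
    exact h.1 rfl

/-- Eliminate a list of vertices, in order. -/
def elimList (G : SimpleGraph V) : List V → SimpleGraph V
  | [] => G
  | x :: xs => elimList (eliminate G x) xs

/-- The graph obtained from `G` after eliminating the first `i` variables of `π`. -/
def graphAt (G : SimpleGraph V) (π : List V) (i : ℕ) : SimpleGraph V :=
  elimList G (π.take i)

/-- `x` together with its neighbors in the undirected graph `G`. -/
def closedNbhd (G : SimpleGraph V) (x : V) : Set V := insert x {y | G.Adj x y}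

/-- An elimination order: a total ordering of all the variables. -/
def IsElimOrder (π : List V) : Prop := π.Nodup ∧ ∀ x : V, x ∈ π

/-- The cluster of variable `X` in the elimination process on the moral graph of `E`
induced by `π`: `X` together with its neighbors in the graph just before `X` is eliminated. -/
def clusterOf (E : V → V → Prop) (π : List V) (X : V) : Set V :=
  closedNbhd (graphAt (moralGraph E) π (π.idxOf X)) X

/-- The width of an elimination order: the size of its largest cluster minus one. -/
def orderWidth (E : V → V → Prop) (π : List V) : ℕ :=
  sSup {n : ℕ | ∃ X ∈ π, n = (clusterOf E π X).ncard} - 1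

/-- The treewidth of the DAG `E`: the minimum width attained by an elimination order. -/
def treewidthOf (E : V → V → Prop) : ℕ :=
  sInf {w : ℕ | ∃ π : List V, IsElimOrder π ∧ orderWidth E π = w}

/-! ### Twin networks -/

/-- The variables of the twin network of `E`: the base variables (`Sum.inl`) together
with a duplicate (`Sum.inr`) for every internal (non-root) variable. -/
abbrev TwinVar (E : V → V → Prop) : Type u := V ⊕ {x : V // ¬ isRoot E x}

/-- The duplicate `X'` of a variable `X`; by convention `X' = X` when `X` is a root. -/
def twinDup (E : V → V → Prop) (x : V) : TwinVar E :=
  if h : isRoot E x then Sum.inl x else Sum.inr ⟨x, h⟩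

/-- The edges of the twin network `G^t` of the base network `E`. -/
def twinEdge (E : V → V → Prop) (a b : TwinVar E) : Prop :=
  match a, b with
  | Sum.inl p, Sum.inl x => E p x
  | Sum.inl p, Sum.inr x => isRoot E p ∧ E p x.1
  | Sum.inr p, Sum.inr x => E p.1 x.1
  | Sum.inr _, Sum.inl _ => False

/-- The twin elimination order: replace each non-root variable `X` of `π`
by the two consecutive variables `X, X'`. -/
def twinOrder (E : V → V → Prop) (π : List V) : List (TwinVar E) :=
  π.foldr (fun x acc =>
    (if h : isRoot E x then [Sum.inl x] else [Sum.inl x, Sum.inr ⟨x, h⟩]) ++ acc) []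

/-- Eliminate the pair `{X, X'}` (a single variable when `X` is a root) from a graph
on the twin variables. -/
def elimTwinPair (E : V → V → Prop) (G : SimpleGraph (TwinVar E)) (x : V) :
    SimpleGraph (TwinVar E) :=
  if h : isRoot E x then eliminate G (Sum.inl x)
  else eliminate (eliminate G (Sum.inl x)) (Sum.inr ⟨x, h⟩)

/-- The twin graph sequence: `twinGraphAt E π i` is the graph obtained from the moral graph
of the twin network after eliminating the pairs `{π 0, (π 0)'}, …` for the first `i`
variables of `π`. -/
def twinGraphAt (E : V → V → Prop) (π : List V) (i : ℕ) : SimpleGraph (TwinVar E) :=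
  (π.take i).foldl (elimTwinPair E) (moralGraph (twinEdge E))

/-- The cluster of twin variable `Y` in the elimination process on the moral graph of the
twin network induced by the twin elimination order. -/
def twinClusterOf (E : V → V → Prop) (π : List V) (Y : TwinVar E) : Set (TwinVar E) :=
  clusterOf (twinEdge E) (twinOrder E π) Y

/-! ### Jointrees -/

/-- A leaf of a tree: a node with exactly one neighbor. -/
def IsLeaf {J : Type v} (T : SimpleGraph J) (j : J) : Prop := ∃! k, T.Adj j k

/-- A jointree for the DAG `E`: a tree `T` together with a host function `H` mapping
(the index `X` of) each family of `E` to a nonempty set of hosting nodes; only leaves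
may be hosts and each leaf hosts exactly one family. -/
structure Jointree (E : V → V → Prop) (J : Type v) where
  T : SimpleGraph J
  isTree : T.IsTree
  H : V → Set J
  hosts_nonempty : ∀ X : V, (H X).Nonempty
  hosts_leaf : ∀ (X : V) (j : J), j ∈ H X → IsLeaf T j
  leaf_host : ∀ j : J, IsLeaf T j → ∃! X : V, j ∈ H X

variable {E : V → V → Prop} {J : Type v}

/-- The variables appearing (in a family hosted by a leaf) on the `i`-side of the
tree edge `(i, j)`. -/
def sideVars (jt : Jointree E J) (i j : J) : Set V :=
  {X | ∃ (Y : V) (l : J), l ∈ jt.H Y ∧ X ∈ famOf E Y ∧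
    (jt.T.deleteEdges {s(i, j)}).Reachable i l}

/-- The separator of the tree edge `(i, j)`: the variables hosted on both sides. -/
def sepOf (jt : Jointree E J) (i j : J) : Set V :=
  sideVars jt i j ∩ sideVars jt j i

/-- The cluster of a jointree node: for a leaf, the family it hosts; for an internal
node, the union of the separators of its adjacent edges. -/
def clusterJT (jt : Jointree E J) (i : J) : Set V :=
  if IsLeaf jt.T i then ⋃ X ∈ {Y : V | i ∈ jt.H Y}, famOf E X
  else ⋃ j ∈ {j : J | jt.T.Adj i j}, sepOf jt i j

/-- The width of a jointree: the size of its largest cluster minus one. -/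
def widthJT (jt : Jointree E J) : ℕ := (⨆ i : J, (clusterJT jt i).ncard) - 1

/-- `l` is at or below `u` in the tree `T` rooted at `r`: `u` lies on every
(equivalently, on the unique) path from `r` to `l`. -/
def Below {J : Type v} (T : SimpleGraph J) (r u l : J) : Prop :=
  ∀ p : T.Walk r l, p.IsPath → u ∈ p.support

/-- Node `u` of the jointree is duplicated by Algorithm 1 (with root `r`): every leaf at
or below `u` hosts only families of internal variables. -/
def Duplicated (jt : Jointree E J) (r u : J) : Prop :=
  ∀ l : J, IsLeaf jt.T l → Below jt.T r u l → ∀ X : V, l ∈ jt.H X → ¬ isRoot E X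

/-- The nodes of the twin jointree produced by Algorithm 1: the original nodes
(`Sum.inl`) plus a duplicate (`Sum.inr`) of every duplicated node. -/
abbrev TwinJ (jt : Jointree E J) (r : J) := J ⊕ {u : J // Duplicated jt r u}

/-- Adjacency of the twin jointree produced by Algorithm 1: the original tree edges,
the duplicates of the duplicated edges, and the edges attaching the roots of the
duplicate subtrees to the parents of the corresponding duplicated subtree roots. -/
def twinTAdj (jt : Jointree E J) (r : J) : TwinJ jt r → TwinJ jt r → Prop
  | Sum.inl i, Sum.inl j => jt.T.Adj i j
  | Sum.inl i, Sum.inr v => jt.T.Adj i v.1 ∧ ¬ Duplicated jt r i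
  | Sum.inr u, Sum.inl j => jt.T.Adj u.1 j ∧ ¬ Duplicated jt r j
  | Sum.inr u, Sum.inr v => jt.T.Adj u.1 v.1

/-- The tree of the twin jointree produced by Algorithm 1. -/
def twinT (jt : Jointree E J) (r : J) : SimpleGraph (TwinJ jt r) where
  Adj := twinTAdj jt r
  symm := by
    constructor
    rintro (i | u) (j | v) h <;> simp only [twinTAdj] at h ⊢
    · exact jt.T.adj_symm h
    · exact ⟨jt.T.adj_symm h.1, h.2⟩
    · exact ⟨jt.T.adj_symm h.1, h.2⟩
    · exact jt.T.adj_symm h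
  loopless := by
    constructor
    rintro (i | u) h <;> simp only [twinTAdj] at h
    · exact jt.T.ne_of_adj h rfl
    · exact jt.T.ne_of_adj h rfl

/-- The host function of the twin jointree produced by Algorithm 1: a base family is
hosted by the original hosts of the corresponding base family, and a duplicate family is
hosted by the duplicates of the hosts of the corresponding base family. -/
def twinH (jt : Jointree E J) (r : J) : TwinVar E → Set (TwinJ jt r) :=
  fun a =>
    match a with
    | Sum.inl X => Sum.inl '' jt.H X
    | Sum.inr x => {b | ∃ (l : J) (hl : Duplicated jt r l),
        l ∈ jt.H x.1 ∧ b = Sum.inr ⟨l, hl⟩}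

/-- The copy of jointree node `i` on the duplicate side: its duplicate if `i` is
duplicated, and `i` itself otherwise. -/
def dupJ (jt : Jointree E J) (r i : J) : TwinJ jt r :=
  if h : Duplicated jt r i then Sum.inr ⟨i, h⟩ else Sum.inl i

/-! ### Thinning -/

/-- Thinning rule 1 for removing the functional variable `X` from the separator of
edge `(i,j)`: the edge lies on a path between two leaves hosting the family of `X`,
and every separator on this path contains `X`. -/
def Rule1 (jt : Jointree E J) (S : J → J → Set V) (i j : J) (X : V) : Prop :=
  ∃ (l m : J) (p : jt.T.Walk l m), p.IsPath ∧ l ∈ jt.H X ∧ m ∈ jt.H X ∧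
    s(i, j) ∈ p.edges ∧ ∀ a b : J, s(a, b) ∈ p.edges → X ∈ S a b

/-- Thinning rule 2 for removing the variable `X` from the separator of edge `(i,j)`:
no other separator adjacent to `i` contains `X`, or no other separator adjacent to `j`
contains `X`. -/
def Rule2 (jt : Jointree E J) (S : J → J → Set V) (i j : J) (X : V) : Prop :=
  (∀ k : J, jt.T.Adj i k → k ≠ j → X ∉ S i k) ∨
  (∀ k : J, jt.T.Adj j k → k ≠ i → X ∉ S j k)

/-- One valid thinning step on a separator assignment: remove a functional
(here: internal, as in an SCM) variable `X` from the separator of an edge `(i,j)`,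
as licensed by one of the two thinning rules. -/
def ThinStep (jt : Jointree E J) (S S' : J → J → Set V) : Prop :=
  ∃ (i j : J) (X : V), jt.T.Adj i j ∧ ¬ isRoot E X ∧ X ∈ S i j ∧
    (Rule1 jt S i j X ∨ Rule2 jt S i j X) ∧
    S' = fun a b => if (a = i ∧ b = j) ∨ (a = j ∧ b = i) then S a b \ {X} else S a b

/-- `S` is the separator assignment of a thinned jointree obtained from `jt`:
it is reachable from the separators of `jt` by valid thinning steps, applied
to exhaustion. -/
def IsThinning (jt : Jointree E J) (S : J → J → Set V) : Prop :=
  Relation.ReflTransGen (ThinStep jt) (fun i j => sepOf jt i j) S ∧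
    ∀ S', ¬ ThinStep jt S S'

/-- The cluster of a node of a thinned jointree with separator assignment `S`. -/
def thClusterJT (jt : Jointree E J) (S : J → J → Set V) (i : J) : Set V :=
  if IsLeaf jt.T i then ⋃ X ∈ {Y : V | i ∈ jt.H Y}, famOf E X
  else ⋃ j ∈ {j : J | jt.T.Adj i j}, S i j

/-- The width of a thinned jointree with separator assignment `S`. -/
def thWidthJT (jt : Jointree E J) (S : J → J → Set V) : ℕ :=
  (⨆ i : J, (thClusterJT jt S i).ncard) - 1

/-- The causal treewidth of the DAG `E` whose internal variables are all functional:
the minimum width attained by a thinned jointree for `E`. -/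
def causalTreewidth (E : V → V → Prop) : ℕ :=
  sInf {w : ℕ | ∃ (J : Type u) (_ : Finite J) (jt : Jointree E J) (S : J → J → Set V),
    IsThinning jt S ∧ thWidthJT jt S = w}

/-- The thinned separator assignment for the twin jointree produced by Algorithm 1,
obtained from a thinned separator assignment `S` of the base jointree:
`S^t = S` on duplicated edges, `S^t = S'` on duplicate edges, and
`S^t = S ∪ S'` on invariant edges. -/
def twinSep (jt : Jointree E J) (r : J) (S : J → J → Set V) :
    TwinJ jt r → TwinJ jt r → Set (TwinVar E)
  | Sum.inl i, Sum.inl j =>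
      if Duplicated jt r i ∨ Duplicated jt r j then Sum.inl '' S i j
      else Sum.inl '' S i j ∪ twinDup E '' S i j
  | Sum.inl i, Sum.inr v => twinDup E '' S i v.1
  | Sum.inr u, Sum.inl j => twinDup E '' S u.1 j
  | Sum.inr u, Sum.inr v => twinDup E '' S u.1 v.1

/-! ### N-world networks -/

/-- The variables of the `N`-world network of a base network with variables `V`,
with respect to a set `R` of roots: the variables in `R` (`Sum.inl`) stay unreplicated,
and each variable outside `R` is replaced by `N` duplicates (`Sum.inr`). -/
abbrev NVar (R : Set V) (N : ℕ) : Type u := {x : V // x ∈ R} ⊕ ({x : V // x ∉ R} × Fin N)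

/-- The `k`-th duplicate `X^k` of variable `X`; by convention `X^k = X` when `X ∈ R`. -/
def ndup (R : Set V) (N : ℕ) (x : V) (k : Fin N) : NVar R N :=
  if h : x ∈ R then Sum.inl ⟨x, h⟩ else Sum.inr (⟨x, h⟩, k)

/-- The edges of the `N`-world network `G^N` of the base network `E` with respect to the
set of roots `R`: a parent `P ∈ R` of `X` is a parent of every duplicate `X^k`, while a
parent `P ∉ R` of `X` yields the edges `P^k → X^k`. -/
def nEdge (E : V → V → Prop) (R : Set V) (N : ℕ) (a b : NVar R N) : Prop :=
  match a, b with
  | Sum.inl p, Sum.inr x => E p.1 x.1.1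
  | Sum.inr p, Sum.inr x => E p.1.1 x.1.1 ∧ p.2 = x.2
  | _, _ => False

/-- Eliminate all `N` duplicates `x^1, …, x^N` of `x` (a single variable when `x ∈ R`). -/
def elimNBlock (R : Set V) (N : ℕ) (G : SimpleGraph (NVar R N)) (x : V) :
    SimpleGraph (NVar R N) :=
  if h : x ∈ R then eliminate G (Sum.inl ⟨x, h⟩)
  else (List.ofFn (fun k : Fin N => (Sum.inr (⟨x, h⟩, k) : NVar R N))).foldl eliminate G

/-- The `N`-world elimination order obtained from `π`: replace each variable `x ∉ R`
by its `N` duplicates `x^1, …, x^N`. -/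
def nOrder (R : Set V) (N : ℕ) (π : List V) : List (NVar R N) :=
  π.foldr (fun x acc =>
    (if h : x ∈ R then [(Sum.inl ⟨x, h⟩ : NVar R N)]
     else List.ofFn (fun k : Fin N => (Sum.inr (⟨x, h⟩, k) : NVar R N))) ++ acc) []

/-! ### Generalized N-world networks -/

/-- The variables of a generalized `N`-world network: nodes outside the duplicated set `D`
stay unreplicated, and each node in `D` is replaced by `N` duplicates. -/
abbrev GNVar (D : Set V) (N : ℕ) : Type u := {x : V // x ∉ D} ⊕ ({x : V // x ∈ D} × Fin N)

/-- The edges of a generalized `N`-world network of the base network `E` with respect to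
the duplicated set `D` and the optional extra edges `ex` between duplicates (an edge from
`X^i` to `X^j` is added when `i < j` and `ex X i j` holds). -/
def gnEdge (E : V → V → Prop) (D : Set V) (N : ℕ) (ex : V → Fin N → Fin N → Prop)
    (a b : GNVar D N) : Prop :=
  match a, b with
  | Sum.inl p, Sum.inl x => E p.1 x.1
  | Sum.inl p, Sum.inr x => E p.1 x.1.1
  | Sum.inr p, Sum.inr x =>
      (E p.1.1 x.1.1 ∧ p.2 = x.2) ∨ (p.1.1 = x.1.1 ∧ p.2 < x.2 ∧ ex x.1.1 p.2 x.2)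
  | Sum.inr _, Sum.inl _ => False


/-- The `N`-world graph sequence: the graph obtained from the moral graph of the
`N`-world network after eliminating all duplicates of the first `i` variables of `π`. -/
def nGraphAt (E : V → V → Prop) (R : Set V) (N : ℕ) (π : List V) (i : ℕ) :
    SimpleGraph (NVar R N) :=
  (π.take i).foldl (elimNBlock R N) (moralGraph (nEdge E R N))

/-- The cluster of an `N`-world variable `Y` in the elimination process on the moral
graph of the `N`-world network induced by the `N`-world elimination order. -/
def nClusterOf (E : V → V → Prop) (R : Set V) (N : ℕ) (π : List V) (Y : NVar R N) :
    Set (NVar R N) :=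
  clusterOf (nEdge E R N) (nOrder R N π) Y

end



section TwinTwAux

universe w

/-! Auxiliary lemmas for `twin_treewidth_le`. -/

lemma elimList_append' {W : Type w} (G : SimpleGraph W) (l₁ l₂ : List W) :
    elimList G (l₁ ++ l₂) = elimList (elimList G l₁) l₂ := by
  induction l₁ generalizing G with
  | nil => rfl
  | cons x l ih =>
    simp only [List.cons_append, elimList]
    exact ih (eliminate G x)

variable {V : Type u} {E : V → V → Prop}

/-- Projection of a twin variable to its base variable. -/
def tbase (E : V → V → Prop) : TwinVar E → V := Sum.elim id (fun p => p.1)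

@[simp] lemma tbase_inl (x : V) : tbase E (Sum.inl x) = x := rfl

@[simp] lemma tbase_inr (p : {x : V // ¬ isRoot E x}) : tbase E (Sum.inr p) = p.1 := rfl

/-- The lift of a graph on `V` to the twin variables: two twin variables are adjacent
iff they are distinct and project to equal or adjacent base variables. -/
def liftG (E : V → V → Prop) (H : SimpleGraph V) : SimpleGraph (TwinVar E) where
  Adj a b := a ≠ b ∧ (tbase E a = tbase E b ∨ H.Adj (tbase E a) (tbase E b))
  symm := by
    constructor
    rintro a b ⟨h1, h2⟩
    refine ⟨h1.symm, ?_⟩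
    rcases h2 with h | h
    · exact Or.inl h.symm
    · exact Or.inr h.symm
  loopless := ⟨fun a h => h.1 rfl⟩

/-- The block of twin variables replacing a base variable in the twin order. -/
noncomputable def tblock (E : V → V → Prop) (x : V) : List (TwinVar E) :=
  if h : isRoot E x then [Sum.inl x] else [Sum.inl x, Sum.inr ⟨x, h⟩]

lemma twinOrder_cons (x : V) (l : List V) :
    twinOrder E (x :: l) = tblock E x ++ twinOrder E l := rfl

lemma twinOrder_nil : twinOrder E ([] : List V) = [] := rfl

lemma twinOrder_append (l₁ l₂ : List V) :
    twinOrder E (l₁ ++ l₂) = twinOrder E l₁ ++ twinOrder E l₂ := by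
  induction l₁ with
  | nil => rfl
  | cons x l ih =>
    simp only [List.cons_append, twinOrder_cons, ih, List.append_assoc]

lemma tbase_mem_tblock {a : TwinVar E} {x : V} (h : a ∈ tblock E x) : tbase E a = x := by
  unfold tblock at h
  split at h
  · rw [List.mem_singleton.mp h]
    rfl
  · rcases List.mem_cons.mp h with rfl | h
    · rfl
    · rw [List.mem_singleton.mp h]
      rfl

lemma tbase_mem_twinOrder {l : List V} {a : TwinVar E} (h : a ∈ twinOrder E l) :
    tbase E a ∈ l := by
  induction l with
  | nil => simp [twinOrder_nil] at h
  | cons x l ih =>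
    rw [twinOrder_cons, List.mem_append] at h
    rcases h with h | h
    · rw [tbase_mem_tblock h]
      exact List.mem_cons_self
    · exact List.mem_cons_of_mem _ (ih h)

lemma inl_mem_twinOrder {l : List V} {x : V} (h : x ∈ l) :
    (Sum.inl x : TwinVar E) ∈ twinOrder E l := by
  induction l with
  | nil => simp at h
  | cons y l ih =>
    rw [twinOrder_cons, List.mem_append]
    rcases List.mem_cons.mp h with rfl | h
    · left
      unfold tblock
      split <;> simp
    · exact Or.inr (ih h)

lemma inr_mem_twinOrder {l : List V} {x : V} (hn : ¬ isRoot E x) (h : x ∈ l) :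
    (Sum.inr ⟨x, hn⟩ : TwinVar E) ∈ twinOrder E l := by
  induction l with
  | nil => simp at h
  | cons y l ih =>
    rw [twinOrder_cons, List.mem_append]
    rcases List.mem_cons.mp h with rfl | h
    · left
      unfold tblock
      rw [dif_neg hn]
      simp
    · exact Or.inr (ih h)

lemma tblock_nodup (x : V) : (tblock E x).Nodup := by
  unfold tblock
  split <;> simp

lemma twinOrder_nodup {l : List V} (h : l.Nodup) : (twinOrder E l).Nodup := by
  induction l with
  | nil => exact List.nodup_nil
  | cons x l ih =>
    rw [twinOrder_cons]
    rcases List.nodup_cons.mp h with ⟨hx, hl⟩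
    refine List.Nodup.append (tblock_nodup x) (ih hl) ?_
    intro a ha ha'
    have h1 := tbase_mem_tblock ha
    have h2 := tbase_mem_twinOrder ha'
    rw [h1] at h2
    exact hx h2

lemma eq_of_tbase_eq {a : TwinVar E} {x : V} (h : tbase E a = x) :
    a = Sum.inl x ∨ ∃ hn : ¬ isRoot E x, a = Sum.inr ⟨x, hn⟩ := by
  cases a with
  | inl y =>
    left
    simp only [tbase_inl] at h
    rw [h]
  | inr p =>
    right
    obtain ⟨y, hy⟩ := p
    simp only [tbase_inr] at h
    subst h
    exact ⟨hy, rfl⟩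

lemma twinEdge_tbase {a b : TwinVar E} (h : twinEdge E a b) :
    E (tbase E a) (tbase E b) := by
  cases a with
  | inl p =>
    cases b with
    | inl x => exact h
    | inr x => exact h.2
  | inr p =>
    cases b with
    | inl x => exact h.elim
    | inr x => exact h

lemma moral_twin_le : moralGraph (twinEdge E) ≤ liftG E (moralGraph E) := by
  rintro a b ⟨hab, h⟩
  refine ⟨hab, ?_⟩
  by_cases hb : tbase E a = tbase E b
  · exact Or.inl hb
  refine Or.inr ⟨hb, ?_⟩
  rcases h with h | h | ⟨c, h1, h2⟩
  · exact Or.inl (twinEdge_tbase h)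
  · exact Or.inr (Or.inl (twinEdge_tbase h))
  · exact Or.inr (Or.inr ⟨tbase E c, twinEdge_tbase h1, twinEdge_tbase h2⟩)

lemma eliminate_mono {W : Type w} {G G' : SimpleGraph W} (h : G ≤ G') (x : W) :
    eliminate G x ≤ eliminate G' x := by
  rintro a b ⟨h1, h2, h3, h4⟩
  refine ⟨h1, h2, h3, ?_⟩
  rcases h4 with h4 | ⟨h4, h5⟩
  · exact Or.inl (h h4)
  · exact Or.inr ⟨h h4, h h5⟩

lemma tblock_step {G : SimpleGraph (TwinVar E)} {H : SimpleGraph V}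
    (hGH : G ≤ liftG E H) (x : V) :
    elimList G (tblock E x) ≤ liftG E (eliminate H x) := by
  have hbase : ∀ a b : TwinVar E, G.Adj a b →
      tbase E a = tbase E b ∨ H.Adj (tbase E a) (tbase E b) := fun a b h => (hGH h).2
  have toX : ∀ (u c : TwinVar E), tbase E u ≠ x → tbase E c = x → G.Adj u c →
      H.Adj (tbase E u) x := by
    intro u c hu hc h
    rcases hbase _ _ h with h' | h'
    · rw [hc] at h'
      exact absurd h' hu
    · rw [hc] at h'
      exact h'
  unfold tblock
  split
  case isTrue hroot =>
    show eliminate G (Sum.inl x) ≤ liftG E (eliminate H x)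
    rintro a b ⟨hab, ha, hb, hor⟩
    refine ⟨hab, ?_⟩
    by_cases heq : tbase E a = tbase E b
    · exact Or.inl heq
    have hax : tbase E a ≠ x := by
      intro h
      rcases eq_of_tbase_eq h with rfl | ⟨hn, rfl⟩
      · exact ha rfl
      · exact hn hroot
    have hbx : tbase E b ≠ x := by
      intro h
      rcases eq_of_tbase_eq h with rfl | ⟨hn, rfl⟩
      · exact hb rfl
      · exact hn hroot
    refine Or.inr ⟨heq, hax, hbx, ?_⟩
    rcases hor with h | ⟨h1, h2⟩
    · rcases hbase _ _ h with h' | h'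
      · exact absurd h' heq
      · exact Or.inl h'
    · exact Or.inr ⟨toX a (Sum.inl x) hax rfl h1, (toX b (Sum.inl x) hbx rfl h2.symm).symm⟩
  case isFalse hroot =>
    show eliminate (eliminate G (Sum.inl x)) (Sum.inr ⟨x, hroot⟩) ≤ liftG E (eliminate H x)
    rintro a b ⟨hab, ha2, hb2, hor⟩
    refine ⟨hab, ?_⟩
    by_cases heq : tbase E a = tbase E b
    · exact Or.inl heq
    have ha1 : a ≠ Sum.inl x := by
      rcases hor with h | ⟨h, _⟩
      · exact h.2.1
      · exact h.2.1
    have hb1 : b ≠ Sum.inl x := by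
      rcases hor with h | ⟨_, h⟩
      · exact h.2.2.1
      · exact h.2.2.1
    have hax : tbase E a ≠ x := by
      intro h
      rcases eq_of_tbase_eq h with rfl | ⟨hn, rfl⟩
      · exact ha1 rfl
      · exact ha2 rfl
    have hbx : tbase E b ≠ x := by
      intro h
      rcases eq_of_tbase_eq h with rfl | ⟨hn, rfl⟩
      · exact hb1 rfl
      · exact hb2 rfl
    refine Or.inr ⟨heq, hax, hbx, ?_⟩
    have haX : ∀ u : TwinVar E, tbase E u ≠ x →
        (eliminate G (Sum.inl x)).Adj u (Sum.inr ⟨x, hroot⟩) → H.Adj (tbase E u) x := by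
      rintro u hu ⟨_, _, _, h | ⟨h1', h2'⟩⟩
      · exact toX u (Sum.inr ⟨x, hroot⟩) hu rfl h
      · exact toX u (Sum.inl x) hu rfl h1'
    rcases hor with ⟨_, _, _, h | ⟨h1, h2⟩⟩ | ⟨h1, h2⟩
    · rcases hbase _ _ h with h' | h'
      · exact absurd h' heq
      · exact Or.inl h'
    · exact Or.inr ⟨toX a (Sum.inl x) hax rfl h1, (toX b (Sum.inl x) hbx rfl h2.symm).symm⟩
    · exact Or.inr ⟨haX _ hax h1, (haX _ hbx h2.symm).symm⟩

lemma twin_elim_invariant {G : SimpleGraph (TwinVar E)} {H : SimpleGraph V}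
    (hGH : G ≤ liftG E H) (l : List V) :
    elimList G (twinOrder E l) ≤ liftG E (elimList H l) := by
  induction l generalizing G H with
  | nil => exact hGH
  | cons x l ih =>
    rw [twinOrder_cons, elimList_append']
    show elimList (elimList G (tblock E x)) (twinOrder E l) ≤
      liftG E (elimList (eliminate H x) l)
    exact ih (tblock_step hGH x)

lemma closedNbhd_inl_subset {G : SimpleGraph (TwinVar E)} {H : SimpleGraph V}
    (hGH : G ≤ liftG E H) (x : V) :
    closedNbhd G (Sum.inl x) ⊆ tbase E ⁻¹' closedNbhd H x := by
  rintro a (rfl | ha)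
  · exact Set.mem_insert _ _
  · rcases (hGH ha).2 with h | h
    · exact Set.mem_insert_iff.mpr (Or.inl h.symm)
    · exact Set.mem_insert_iff.mpr (Or.inr h)

lemma closedNbhd_inr_subset {G : SimpleGraph (TwinVar E)} {H : SimpleGraph V}
    (hGH : G ≤ liftG E H) (x : V) (hn : ¬ isRoot E x) :
    closedNbhd (eliminate G (Sum.inl x)) (Sum.inr ⟨x, hn⟩ : TwinVar E) ⊆
      tbase E ⁻¹' closedNbhd H x := by
  rintro a (rfl | ha)
  · exact Set.mem_insert _ _
  · obtain ⟨h1, h2, h3, h4⟩ := ha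
    have key : ∀ b : TwinVar E, G.Adj b a → tbase E b = x → tbase E a ∈ closedNbhd H x := by
      intro b hb hbx
      rcases (hGH hb).2 with h | h
      · rw [hbx] at h
        exact Set.mem_insert_iff.mpr (Or.inl h.symm)
      · rw [hbx] at h
        exact Set.mem_insert_iff.mpr (Or.inr h)
    rcases h4 with h | ⟨h', h''⟩
    · exact key _ h rfl
    · exact key _ h'' rfl

lemma ncard_preimage_tbase_le [Fintype V] (C : Set V) :
    (tbase E ⁻¹' C).ncard ≤ 2 * C.ncard := by
  have hsub : tbase E ⁻¹' C ⊆ (Sum.inl '' C) ∪ (twinDup E '' C) := by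
    rintro (y | ⟨y, hy⟩) h
    · exact Or.inl ⟨y, h, rfl⟩
    · refine Or.inr ⟨y, h, ?_⟩
      unfold twinDup
      rw [dif_neg hy]
  calc (tbase E ⁻¹' C).ncard ≤ ((Sum.inl '' C) ∪ (twinDup E '' C)).ncard :=
        Set.ncard_le_ncard hsub (Set.toFinite _)
    _ ≤ (Sum.inl '' C : Set (TwinVar E)).ncard + (twinDup E '' C).ncard :=
        Set.ncard_union_le _ _
    _ ≤ C.ncard + C.ncard :=
        add_le_add (Set.ncard_image_le (Set.toFinite _)) (Set.ncard_image_le (Set.toFinite _))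
    _ = 2 * C.ncard := (two_mul _).symm

section IndexOfInst

attribute [local instance 2000] Classical.propDecidable

lemma base_cluster_prefix {π₂ : List V} {π₁ : List V} {x : V} (hx1 : x ∉ π₁) :
    clusterOf E (π₁ ++ x :: π₂) x = closedNbhd (elimList (moralGraph E) π₁) x := by
  classical
  unfold clusterOf graphAt
  rw [List.idxOf_append_of_notMem hx1, List.idxOf_cons_self, Nat.add_zero,
    List.take_left]

lemma cluster_twin_inl {π₁ π₂ : List V} {x : V}
    (h1 : (Sum.inl x : TwinVar E) ∉ twinOrder E π₁) :
    clusterOf (twinEdge E) (twinOrder E π₁ ++ (tblock E x ++ twinOrder E π₂)) (Sum.inl x)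
      = closedNbhd (elimList (moralGraph (twinEdge E)) (twinOrder E π₁)) (Sum.inl x) := by
  unfold clusterOf graphAt
  letI : BEq (TwinVar E) := instBEqOfDecidableEq
  rw [List.idxOf_append_of_notMem h1]
  unfold tblock
  split
  · rw [List.singleton_append, List.idxOf_cons_self, Nat.add_zero, List.take_left]
  · rw [List.cons_append, List.idxOf_cons_self, Nat.add_zero, List.take_left]

lemma cluster_twin_inr {π₁ π₂ : List V} {x : V} (hn : ¬ isRoot E x)
    (h1 : (Sum.inr ⟨x, hn⟩ : TwinVar E) ∉ twinOrder E π₁ ++ [Sum.inl x]) :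
    clusterOf (twinEdge E) ((twinOrder E π₁ ++ [Sum.inl x]) ++
        ((Sum.inr ⟨x, hn⟩ : TwinVar E) :: twinOrder E π₂)) (Sum.inr ⟨x, hn⟩)
      = closedNbhd (eliminate (elimList (moralGraph (twinEdge E)) (twinOrder E π₁))
          (Sum.inl x)) (Sum.inr ⟨x, hn⟩) := by
  unfold clusterOf graphAt
  letI : BEq (TwinVar E) := instBEqOfDecidableEq
  rw [List.idxOf_append_of_notMem h1, List.idxOf_cons_self, Nat.add_zero,
    List.take_left, elimList_append']
  rfl

end IndexOfInst

lemma twin_cluster_bound [Fintype V] {π : List V} (hnd : π.Nodup) {Y : TwinVar E}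
    (hY : Y ∈ twinOrder E π) :
    (clusterOf (twinEdge E) (twinOrder E π) Y).ncard
      ≤ 2 * (clusterOf E π (tbase E Y)).ncard := by
  classical
  have main : ∀ (x : V), x ∈ π → ∀ (π₁ π₂ : List V), π = π₁ ++ x :: π₂ → x ∉ π₁ →
      tbase E Y = x →
      (clusterOf (twinEdge E) (twinOrder E π) Y).ncard ≤ 2 * (clusterOf E π x).ncard := by
    intro x hxπ π₁ π₂ hdecomp hx1 htb
    have hG1 : elimList (moralGraph (twinEdge E)) (twinOrder E π₁) ≤
        liftG E (elimList (moralGraph E) π₁) :=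
      twin_elim_invariant moral_twin_le π₁
    have hbasegraph : clusterOf E π x = closedNbhd (elimList (moralGraph E) π₁) x := by
      rw [hdecomp]; exact base_cluster_prefix hx1
    have hnotmem_inl : (Sum.inl x : TwinVar E) ∉ twinOrder E π₁ :=
      fun h => hx1 (tbase_mem_twinOrder h)
    have hsub : clusterOf (twinEdge E) (twinOrder E π) Y ⊆ tbase E ⁻¹' clusterOf E π x := by
      rcases eq_of_tbase_eq htb with hYeq | ⟨hn, hYeq⟩
      · -- Y = Sum.inl x
        have hblock : twinOrder E π = twinOrder E π₁ ++ (tblock E x ++ twinOrder E π₂) := by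
          rw [hdecomp, twinOrder_append, twinOrder_cons]
        rw [hYeq, hblock, cluster_twin_inl hnotmem_inl, hbasegraph]
        exact closedNbhd_inl_subset hG1 x
      · -- Y = Sum.inr ⟨x, hn⟩
        have hblock : twinOrder E π = (twinOrder E π₁ ++ [Sum.inl x]) ++
            ((Sum.inr ⟨x, hn⟩ : TwinVar E) :: twinOrder E π₂) := by
          rw [hdecomp, twinOrder_append, twinOrder_cons]
          unfold tblock
          rw [dif_neg hn]
          simp
        have hnotmem_inr : (Sum.inr ⟨x, hn⟩ : TwinVar E) ∉
            twinOrder E π₁ ++ [Sum.inl x] := by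
          rw [List.mem_append]
          rintro (h | h)
          · exact hx1 (tbase_mem_twinOrder h)
          · simp at h
        rw [hYeq, hblock, cluster_twin_inr hn hnotmem_inr, hbasegraph]
        exact closedNbhd_inr_subset hG1 x hn
    calc (clusterOf (twinEdge E) (twinOrder E π) Y).ncard
        ≤ (tbase E ⁻¹' clusterOf E π x).ncard := Set.ncard_le_ncard hsub (Set.toFinite _)
      _ ≤ 2 * (clusterOf E π x).ncard := ncard_preimage_tbase_le _
  have hxπ : tbase E Y ∈ π := tbase_mem_twinOrder hY
  obtain ⟨π₁, π₂, hdecomp⟩ := List.append_of_mem hxπ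
  have hx1 : tbase E Y ∉ π₁ := by
    rw [hdecomp] at hnd
    rcases List.nodup_append'.mp hnd with ⟨_, _, hdisj⟩
    exact fun hmem => hdisj hmem (List.mem_cons_self)
  exact main (tbase E Y) hxπ π₁ π₂ hdecomp hx1 rfl

lemma cluster_ncard_le_orderWidth [Fintype V] {π : List V} {x : V} (hx : x ∈ π) :
    (clusterOf E π x).ncard ≤ orderWidth E π + 1 := by
  have hmem : (clusterOf E π x).ncard ∈
      {n : ℕ | ∃ X ∈ π, n = (clusterOf E π X).ncard} := ⟨x, hx, rfl⟩
  have hbdd : BddAbove {n : ℕ | ∃ X ∈ π, n = (clusterOf E π X).ncard} := by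
    refine ⟨Fintype.card V, ?_⟩
    rintro n ⟨X, _, rfl⟩
    have := Set.ncard_le_ncard (Set.subset_univ (clusterOf E π X)) Set.finite_univ
    simpa [Set.ncard_univ, Nat.card_eq_fintype_card] using this
  have hle := le_csSup hbdd hmem
  unfold orderWidth
  omega

end TwinTwAux

/-- the treewidth of the twin network is at most twice the treewidth of the
base network plus one. -/
theorem twin_treewidth_le {V : Type*} [Fintype V]
    (E : V → V → Prop) (hE : IsAcyclicRel E) :
    treewidthOf (twinEdge E) ≤ 2 * treewidthOf E + 1 := by
  classical
  have htw : treewidthOf E =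
      sInf {w : ℕ | ∃ π : List V, IsElimOrder π ∧ orderWidth E π = w} := rfl
  have hne : {w : ℕ | ∃ π : List V, IsElimOrder π ∧ orderWidth E π = w}.Nonempty := by
    refine ⟨orderWidth E Finset.univ.toList, Finset.univ.toList,
      ⟨Finset.nodup_toList _, ?_⟩, rfl⟩
    intro x
    exact Finset.mem_toList.mpr (Finset.mem_univ x)
  obtain ⟨π, hπ, hw⟩ := Nat.sInf_mem hne
  have horder : IsElimOrder (twinOrder E π) := by
    refine ⟨twinOrder_nodup hπ.1, ?_⟩
    rintro (x | ⟨x, hx⟩)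
    · exact inl_mem_twinOrder (hπ.2 x)
    · exact inr_mem_twinOrder hx (hπ.2 x)
  have hle1 : treewidthOf (twinEdge E) ≤ orderWidth (twinEdge E) (twinOrder E π) :=
    Nat.sInf_le ⟨twinOrder E π, horder, rfl⟩
  have hOW : orderWidth (twinEdge E) (twinOrder E π) =
      sSup {n : ℕ | ∃ X ∈ twinOrder E π,
        n = (clusterOf (twinEdge E) (twinOrder E π) X).ncard} - 1 := rfl
  have hsup : sSup {n : ℕ | ∃ X ∈ twinOrder E π,
      n = (clusterOf (twinEdge E) (twinOrder E π) X).ncard} ≤ 2 * orderWidth E π + 2 := by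
    apply csSup_le'
    rintro n ⟨Y, hY, rfl⟩
    have h1 := twin_cluster_bound hπ.1 hY
    have h2 := cluster_ncard_le_orderWidth (E := E) (tbase_mem_twinOrder hY)
    omega
  omega

end Counterfactual
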